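/- arXiv:1105.1242 — 6 statements merged into one kernel-verified Lean document; each statement's English description precedes it below -/
import Mathlib

section
/- Let n ≥ 1, N ≥ 1 and 1 ≤ θ ≤ n. Let E be the set of all n×N matrices M with entries in {0,1} such that every column of M has column sum equal to θ−1, θ, or θ+1. Then E is a fooling set for the columnwise extension of the Boolean delta function Π_{{θ}} (where Π_{{θ}} of a column equals 1 iff the column sum is exactly θ), and |E| = (C(n,θ−1) + C(n,θ) + C(n,θ+1))^N, where C(·,·) denotes the binomial coefficient. -/
/-- Replace the `i`-th row of the matrix `M1` by the `i`-th row of `M2`. -/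
def replaceRow {n N : ℕ} {α : Type*} (M1 M2 : Fin n → Fin N → α) (i : Fin n) :
    Fin n → Fin N → α :=
  fun r => if r = i then M2 r else M1 r

/-- The columnwise extension `g^N` of a function `g` on columns:
apply `g` to each of the `N` columns of the matrix `M`. -/
def colApply {n N : ℕ} {α β : Type*} (g : (Fin n → α) → β) (M : Fin n → Fin N → α) :
    Fin N → β :=
  fun j => g (fun i => M i j)

/-- `E` is a fooling set for the columnwise extension `g^N` of `g`: for all distinct
`M1, M2 ∈ E`, either `g^N(M1) ≠ g^N(M2)`, or replacing some row of `M1` by the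
corresponding row of `M2` (or vice versa) changes the `g^N`-value. -/
def IsFoolingSet {n N : ℕ} {α β : Type*} (g : (Fin n → α) → β)
    (E : Set (Fin n → Fin N → α)) : Prop :=
  ∀ M1 ∈ E, ∀ M2 ∈ E, M1 ≠ M2 →
    colApply g M1 ≠ colApply g M2 ∨
    (∃ i, colApply g (replaceRow M1 M2 i) ≠ colApply g M1) ∨
    (∃ i, colApply g (replaceRow M2 M1 i) ≠ colApply g M2)

lemma exists_lt_of_ne_of_sum_le {n : ℕ} (f g : Fin n → ℕ) (hne : f ≠ g)
    (hle : ∑ i, f i ≤ ∑ i, g i) : ∃ i, f i < g i := by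
  by_contra h
  push_neg at h
  have hge : ∑ i, g i ≤ ∑ i, f i := Finset.sum_le_sum (fun i _ => h i)
  have heq : ∑ i, g i = ∑ i, f i := le_antisymm hge hle
  have := (Finset.sum_eq_sum_iff_of_le (fun i _ => h i)).mp heq
  exact hne (funext fun i => ((this i (Finset.mem_univ i)).symm))

lemma sum_col_split {n N : ℕ} (M : Fin n → Fin N → ℕ) (i : Fin n) (j : Fin N) :
    ∑ r, M r j = M i j + ∑ r ∈ Finset.univ.erase i, M r j :=
  (Finset.add_sum_erase Finset.univ (fun r => M r j) (Finset.mem_univ i)).symm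

lemma sum_replaceRow {n N : ℕ} (M1 M2 : Fin n → Fin N → ℕ) (i : Fin n) (j : Fin N) :
    ∑ r, replaceRow M1 M2 i r j = M2 i j + ∑ r ∈ Finset.univ.erase i, M1 r j := by
  unfold replaceRow
  have h : (fun r => (if r = i then M2 r else M1 r) j) = Function.update (fun r => M1 r j) i (M2 i j) := by
    ext r
    by_cases hr : r = i <;> simp [Function.update_apply, hr]
  show ∑ r, (fun r => (if r = i then M2 r else M1 r) j) r = _
  rw [h, Finset.sum_update_of_mem (Finset.mem_univ i), Finset.sdiff_singleton_eq_erase]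

private theorem fool_part (n N θ : ℕ) (hθ1 : 1 ≤ θ) :
    IsFoolingSet (fun x : Fin n → ℕ => if ∑ i, x i = θ then 1 else 0)
      {M : Fin n → Fin N → ℕ | (∀ i j, M i j ≤ 1) ∧
        ∀ j, (∑ i, M i j = θ - 1 ∨ ∑ i, M i j = θ ∨ ∑ i, M i j = θ + 1)} := by
  intro M1 hM1 M2 hM2 hne
  -- find a differing entry
  have hex : ∃ i j, M1 i j ≠ M2 i j := by
    by_contra h
    push_neg at h
    exact hne (funext fun i => funext fun j => h i j)
  obtain ⟨i0, j, hij⟩ := hex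
  set s1 := ∑ i, M1 i j with hs1
  set s2 := ∑ i, M2 i j with hs2
  by_cases h1 : s1 = θ
  · -- replace the differing row in M1: sum changes by ±1
    right; left
    refine ⟨i0, ?_⟩
    intro heq
    have hj := congrFun heq j
    have hsum := sum_replaceRow M1 M2 i0 j
    have hsplit := sum_col_split M1 i0 j
    have hj2 : (if (∑ r, replaceRow M1 M2 i0 r j) = θ then (1:ℕ) else 0)
        = (if (∑ r, M1 r j) = θ then 1 else 0) := hj
    have hnew : (∑ r, replaceRow M1 M2 i0 r j) ≠ θ := by
      clear hj hj2 heq hne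
      rw [hsum]; intro hc; apply hij; omega
    rw [if_neg hnew, if_pos h1] at hj2
    exact absurd hj2 (by norm_num)
  · by_cases h2 : s2 = θ
    · left
      intro heq
      have hj := congrFun heq j
      simp only [colApply] at hj
      rw [if_neg h1, if_pos h2] at hj
      exact absurd hj (by norm_num)
    · right; left
      -- s1, s2 ∈ {θ-1, θ+1}; find i to replace so the new sum is θ
      have c1 := hM1.2 j
      have c2 := hM2.2 j
      have hcolne : (fun i => M1 i j) ≠ (fun i => M2 i j) := by
        intro h; exact hij (congrFun h i0)
      rcases c1 with h1a | h1b | h1c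
      · -- s1 = θ - 1 ≤ s2, find i with M1 i j < M2 i j
        have hle : s1 ≤ s2 := by omega
        obtain ⟨i, hi⟩ := exists_lt_of_ne_of_sum_le _ _ hcolne hle
        refine ⟨i, ?_⟩
        intro heq
        have hj := congrFun heq j
        have hsum := sum_replaceRow M1 M2 i j
        have hsplit := sum_col_split M1 i j
        have hb : M2 i j ≤ 1 := hM2.1 i j
        have hj2 : (if (∑ r, replaceRow M1 M2 i r j) = θ then (1:ℕ) else 0)
            = (if (∑ r, M1 r j) = θ then 1 else 0) := hj
        have hnew : (∑ r, replaceRow M1 M2 i r j) = θ := by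
          clear hj hj2 heq hne hcolne; omega
        rw [if_pos hnew, if_neg h1] at hj2
        exact absurd hj2 (by norm_num)
      · exact absurd h1b h1
      · -- s1 = θ + 1 ≥ s2, find i with M2 i j < M1 i j
        have hle : s2 ≤ s1 := by omega
        obtain ⟨i, hi⟩ := exists_lt_of_ne_of_sum_le _ _ hcolne.symm hle
        refine ⟨i, ?_⟩
        intro heq
        have hj := congrFun heq j
        have hsum := sum_replaceRow M1 M2 i j
        have hsplit := sum_col_split M1 i j
        have ha : M1 i j ≤ 1 := hM1.1 i j
        have hj2 : (if (∑ r, replaceRow M1 M2 i r j) = θ then (1:ℕ) else 0)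
            = (if (∑ r, M1 r j) = θ then 1 else 0) := hj
        have hnew : (∑ r, replaceRow M1 M2 i r j) = θ := by
          clear hj hj2 heq hne hcolne; omega
        rw [if_pos hnew, if_neg h1] at hj2
        exact absurd hj2 (by norm_num)


lemma sum_indicator_card {n : ℕ} (s : Finset (Fin n)) :
    ∑ i, (if i ∈ s then (1:ℕ) else 0) = s.card := by
  rw [← Finset.card_filter]
  congr 1
  exact Finset.filter_univ_mem s

lemma sum_eq_card_filter {n : ℕ} (c : Fin n → ℕ) (h : ∀ i, c i ≤ 1) :
    ∑ i, c i = (Finset.univ.filter (fun i => c i = 1)).card := by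
  rw [Finset.card_filter]
  refine Finset.sum_congr rfl fun i _ => ?_
  rcases Nat.le_one_iff_eq_zero_or_eq_one.mp (h i) with h0 | h0 <;> simp [h0]

private theorem card_part (n N θ : ℕ) (hθ1 : 1 ≤ θ) :
    Set.ncard {M : Fin n → Fin N → ℕ | (∀ i j, M i j ≤ 1) ∧
        ∀ j, (∑ i, M i j = θ - 1 ∨ ∑ i, M i j = θ ∨ ∑ i, M i j = θ + 1)}
      = (n.choose (θ - 1) + n.choose θ + n.choose (θ + 1)) ^ N := by
  classical
  set T : Finset (Finset (Fin n)) :=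
    (Finset.univ.powersetCard (θ-1) ∪ Finset.univ.powersetCard θ) ∪
      Finset.univ.powersetCard (θ+1) with hT
  have hmemT : ∀ s : Finset (Fin n),
      s ∈ T ↔ (s.card = θ - 1 ∨ s.card = θ ∨ s.card = θ + 1) := by
    intro s
    simp [hT, Finset.mem_powersetCard, Finset.mem_union]
  set f : (Fin N → {s : Finset (Fin n) // s ∈ T}) → (Fin n → Fin N → ℕ) :=
    fun g i j => if i ∈ (g j : Finset (Fin n)) then 1 else 0 with hf
  have hinj : Function.Injective f := by
    intro g1 g2 h
    funext j
    apply Subtype.ext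
    ext i
    have := congrFun (congrFun h i) j
    simp only [hf] at this
    split_ifs at this with h1 h2 <;> simp_all
  have hrange : Set.range f = {M : Fin n → Fin N → ℕ | (∀ i j, M i j ≤ 1) ∧
      ∀ j, (∑ i, M i j = θ - 1 ∨ ∑ i, M i j = θ ∨ ∑ i, M i j = θ + 1)} := by
    ext M
    constructor
    · rintro ⟨g, rfl⟩
      constructor
      · intro i j; simp only [hf]; split_ifs <;> omega
      · intro j
        have : ∑ i, f g i j = (g j : Finset (Fin n)).card := by
          simp only [hf]; exact sum_indicator_card _
        rw [this]
        exact (hmemT _).mp (g j).2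
    · rintro ⟨hle, hsum⟩
      refine ⟨fun j => ⟨Finset.univ.filter (fun i => M i j = 1), ?_⟩, ?_⟩
      · rw [hmemT, ← sum_eq_card_filter _ (fun i => hle i j)]
        exact hsum j
      · funext i j
        simp only [hf, Finset.mem_filter, Finset.mem_univ, true_and]
        have := hle i j
        split_ifs with h <;> omega
  have hTcard : T.card = n.choose (θ - 1) + n.choose θ + n.choose (θ + 1) := by
    have d1 : Disjoint (Finset.univ.powersetCard (θ-1) : Finset (Finset (Fin n)))
        (Finset.univ.powersetCard θ) := by
      rw [Finset.disjoint_left]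
      intro s hs hs'
      simp [Finset.mem_powersetCard] at hs hs'
      omega
    have d2 : Disjoint ((Finset.univ.powersetCard (θ-1) ∪ Finset.univ.powersetCard θ) :
        Finset (Finset (Fin n))) (Finset.univ.powersetCard (θ+1)) := by
      rw [Finset.disjoint_left]
      intro s hs hs'
      simp [Finset.mem_powersetCard, Finset.mem_union] at hs hs'
      omega
    rw [hT, Finset.card_union_of_disjoint d2, Finset.card_union_of_disjoint d1]
    simp [Finset.card_powersetCard]
  calc Set.ncard {M : Fin n → Fin N → ℕ | (∀ i j, M i j ≤ 1) ∧
        ∀ j, (∑ i, M i j = θ - 1 ∨ ∑ i, M i j = θ ∨ ∑ i, M i j = θ + 1)}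
      = Set.ncard (Set.range f) := by rw [hrange]
    _ = Nat.card (Fin N → {s : Finset (Fin n) // s ∈ T}) := by
        rw [Set.ncard_eq_toFinset_card']
        rw [← Nat.card_range_of_injective hinj]
        rw [Nat.card_coe_set_eq]
        rw [Set.ncard_eq_toFinset_card']
    _ = (n.choose (θ - 1) + n.choose θ + n.choose (θ + 1)) ^ N := by
        rw [Nat.card_eq_fintype_card, Fintype.card_fun, Fintype.card_coe, hTcard,
          Fintype.card_fin]


/-- The set of Boolean (0/1-entry) `n × N` matrices all of whose columns sum to
`θ - 1`, `θ` or `θ + 1` is a fooling set for the columnwise extension of the Boolean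
delta function `Π_{θ}` (equal to 1 iff the column sum is exactly `θ`), and has
cardinality `(C(n,θ-1) + C(n,θ) + C(n,θ+1))^N`. -/
theorem stmt_11 (n N θ : ℕ) (hn : 1 ≤ n) (hN : 1 ≤ N) (hθ1 : 1 ≤ θ) (hθn : θ ≤ n) :
    IsFoolingSet (fun x : Fin n → ℕ => if ∑ i, x i = θ then 1 else 0)
      {M : Fin n → Fin N → ℕ | (∀ i j, M i j ≤ 1) ∧
        ∀ j, (∑ i, M i j = θ - 1 ∨ ∑ i, M i j = θ ∨ ∑ i, M i j = θ + 1)} ∧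
    Set.ncard {M : Fin n → Fin N → ℕ | (∀ i j, M i j ≤ 1) ∧
        ∀ j, (∑ i, M i j = θ - 1 ∨ ∑ i, M i j = θ ∨ ∑ i, M i j = θ + 1)}
      = (n.choose (θ - 1) + n.choose θ + n.choose (θ + 1)) ^ N := by
  exact ⟨fool_part n N θ hθ1, card_part n N θ hθ1⟩
end

section
/- Let a, b, n be natural numbers with 2 ≤ a ≤ b and a + b = n. Then C(n,b) + (b−a+1)·C(n−1,a−2) + C(n,a) + (b−a+1)·C(n−1,b+1) ≤ C(n+1,a) + (b−a+1)·C(n,b+1), where C(·,·) denotes the binomial coefficient. -/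
lemma key_coeff (a d : ℕ) :
    (a+d+3)*(a+d+2) + d*((a+2)*(a+1)) ≤ (d+1)*((a+2)*(a+d+3)) := by
  have h : (d+1)*((a+2)*(a+d+3)) =
      (a+d+3)*(a+d+2) + d*((a+2)*(a+1)) + d*(a+1)*(d+1) := by ring
  omega

lemma key (a d : ℕ) :
    (2*a+d+3).choose (a+2) + d * (2*a+d+3).choose a
      ≤ (d+1) * (2*a+d+3).choose (a+1) := by
  set m := 2*a+d+3 with hm
  have h1 : m.choose (a+2) * (a+2) = m.choose (a+1) * (a+d+2) := by
    have h := Nat.choose_succ_right_eq m (a+1)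
    have hsub : m - (a+1) = a+d+2 := by omega
    rw [hsub] at h; exact h
  have h2 : m.choose (a+1) * (a+1) = m.choose a * (a+d+3) := by
    have h := Nat.choose_succ_right_eq m a
    have hsub : m - a = a+d+3 := by omega
    rw [hsub] at h; exact h
  have hpos : 0 < (a+2)*(a+d+3) := by positivity
  refine Nat.le_of_mul_le_mul_left ?_ hpos
  calc (a+2)*(a+d+3) * (m.choose (a+2) + d * m.choose a)
      = (a+d+3) * (m.choose (a+2) * (a+2)) + d*(a+2) * (m.choose a * (a+d+3)) := by
        ring
    _ = (a+d+3) * (m.choose (a+1) * (a+d+2)) + d*(a+2) * (m.choose (a+1) * (a+1)) := by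
        rw [h1, ← h2]
    _ = ((a+d+3)*(a+d+2) + d*((a+2)*(a+1))) * m.choose (a+1) := by ring
    _ ≤ ((d+1)*((a+2)*(a+d+3))) * m.choose (a+1) :=
        Nat.mul_le_mul_right _ (key_coeff a d)
    _ = (a+2)*(a+d+3) * ((d+1) * m.choose (a+1)) := by ring

/-- The key binomial inequality (case `a + b = n`) in the induction establishing the
upper bound on the broadcast computation complexity of Boolean interval functions:
`C(n,b) + (b-a+1) C(n-1,a-2) + C(n,a) + (b-a+1) C(n-1,b+1)
  ≤ C(n+1,a) + (b-a+1) C(n,b+1)`. -/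
theorem stmt_13 (a b n : ℕ) (ha : 2 ≤ a) (hab : a ≤ b) (hn : a + b = n) :
    n.choose b + (b - a + 1) * (n - 1).choose (a - 2)
      + n.choose a + (b - a + 1) * (n - 1).choose (b + 1)
    ≤ (n + 1).choose a + (b - a + 1) * n.choose (b + 1) := by
  obtain ⟨A, rfl⟩ : ∃ A, a = A + 2 := ⟨a - 2, by omega⟩
  obtain ⟨d, rfl⟩ : ∃ d, b = A + 2 + d := ⟨b - (A + 2), by omega⟩
  subst hn
  set m := 2*A+d+3 with hm
  have hb : A + 2 + (A + 2 + d) = m + 1 := by omega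
  rw [hb]
  have e0 : (m+1).choose (A+2+d) = (m+1).choose (A+2) := by
    have : A + 2 + d = (m+1) - (A+2) := by omega
    rw [this, Nat.choose_symm (by omega)]
  have e1 : (m+1+1).choose (A+2) = (m+1).choose (A+1) + (m+1).choose (A+2) :=
    Nat.choose_succ_succ (m+1) (A+1)
  have e2 : (m+1).choose (A+2+d+1) = m.choose (A+2+d) + m.choose (A+2+d+1) :=
    Nat.choose_succ_succ m (A+2+d)
  have e3 : (m+1).choose (A+2) = m.choose (A+1) + m.choose (A+2) :=
    Nat.choose_succ_succ m (A+1)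
  have e4 : (m+1).choose (A+1) = m.choose A + m.choose (A+1) :=
    Nat.choose_succ_succ m A
  have e5 : m.choose (A+2+d) = m.choose (A+1) := by
    have : A + 2 + d = m - (A+1) := by omega
    rw [this, Nat.choose_symm (by omega)]
  have hd : A + 2 + d - (A + 2) = d := by omega
  have hA : A + 2 - 2 = A := by omega
  have hm1 : m + 1 - 1 = m := by omega
  rw [hd, hA, hm1, e0, e1, e2, e3, e4, e5]
  have hk := key A d
  rw [show 2*A+d+3 = m from rfl] at hk
  nlinarith [hk]
end

section
/- Let n ≥ 1, N ≥ 1, let m_1,…,m_n ≥ 1 be integers, and let θ ≥ 1. Let E be the set of all n×N matrices M whose (i,j) entry lies in {0,1,…,m_i}, and such that every column of M has column sum equal to θ−1 or θ. Then E is a fooling set for the columnwise extension of the general threshold function Π_θ, where Π_θ of a column (x_1,…,x_n) equals 1 iff x_1+…+x_n ≥ θ. -/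
/-- General alphabets: for node alphabets `{0,…,m_i}` with each `m_i ≥ 1`, the set of
`n × N` matrices whose `i`-th row entries lie in `{0,…,m_i}` and all of whose columns
sum to `θ - 1` or `θ` is a fooling set for the columnwise extension of the general
threshold function `Π_θ` (equal to 1 iff the column sum is at least `θ`). -/
theorem stmt_15 (n N θ : ℕ) (hn : 1 ≤ n) (hN : 1 ≤ N) (hθ : 1 ≤ θ)
    (m : Fin n → ℕ) (hm : ∀ i, 1 ≤ m i) :
    IsFoolingSet (fun x : Fin n → ℕ => if θ ≤ ∑ i, x i then 1 else 0)
      {M : Fin n → Fin N → ℕ | (∀ i j, M i j ≤ m i) ∧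
        ∀ j, (∑ i, M i j = θ - 1 ∨ ∑ i, M i j = θ)} := by
  intro M1 hM1 M2 hM2 hne
  set g : (Fin n → ℕ) → ℕ := fun x => if θ ≤ ∑ i, x i then 1 else 0 with hgdef
  by_cases hg : colApply g M1 = colApply g M2
  · right
    obtain ⟨hM1b, hM1s⟩ := hM1
    obtain ⟨hM2b, hM2s⟩ := hM2
    have hex : ∃ i j, M1 i j ≠ M2 i j := by
      by_contra h
      push_neg at h
      exact hne (funext fun i => funext fun j => h i j)
    obtain ⟨i0, j, hij⟩ := hex
    have hgj : (if θ ≤ ∑ i, M1 i j then 1 else 0) =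
        (if θ ≤ ∑ i, M2 i j then 1 else 0) := congrFun hg j
    have h1 := hM1s j
    have h2 := hM2s j
    have hs : ∑ i, M1 i j = ∑ i, M2 i j := by
      split_ifs at hgj <;> omega
    -- there are indices where M1 < M2 and where M2 < M1 in column j
    have hlt : ∃ i, M1 i j < M2 i j := by
      by_contra h
      push_neg at h
      have : ∑ i, M2 i j < ∑ i, M1 i j :=
        Finset.sum_lt_sum (fun i _ => h i)
          ⟨i0, Finset.mem_univ i0, lt_of_le_of_ne (h i0) (fun e => hij e.symm)⟩
      omega
    have hgt : ∃ i, M2 i j < M1 i j := by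
      by_contra h
      push_neg at h
      have : ∑ i, M1 i j < ∑ i, M2 i j :=
        Finset.sum_lt_sum (fun i _ => h i)
          ⟨i0, Finset.mem_univ i0, lt_of_le_of_ne (h i0) hij⟩
      omega
    have key : ∀ i : Fin n,
        (∑ r, replaceRow M1 M2 i r j) + M1 i j = (∑ r, M1 r j) + M2 i j := by
      intro i
      have hfun : (fun r => replaceRow M1 M2 i r j)
          = Function.update (fun r => M1 r j) i (M2 i j) := by
        funext r
        by_cases h : r = i
        · subst h; simp [replaceRow, Function.update_apply]
        · simp [replaceRow, Function.update_apply, h]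
      have e1 : ∑ r, replaceRow M1 M2 i r j
          = M2 i j + ∑ r ∈ Finset.univ.erase i, M1 r j := by
        rw [show (∑ r, replaceRow M1 M2 i r j)
              = ∑ r, Function.update (fun r => M1 r j) i (M2 i j) r by
            exact Finset.sum_congr rfl fun r _ => congrFun hfun r]
        rw [Finset.sum_update_of_mem (Finset.mem_univ i) (fun r => M1 r j) (M2 i j),
          Finset.sdiff_singleton_eq_erase]
      have e2 : M1 i j + ∑ r ∈ Finset.univ.erase i, M1 r j = ∑ r, M1 r j :=
        Finset.add_sum_erase Finset.univ (fun r => M1 r j) (Finset.mem_univ i)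
      omega
    rcases h1 with h1 | h1
    · -- column sum is θ - 1 : increase an entry
      obtain ⟨i, hi⟩ := hlt
      refine Or.inl ⟨i, fun heq => ?_⟩
      have hkey := key i
      have hj := congrFun heq j
      simp only [colApply, hgdef] at hj
      split_ifs at hj <;> omega
    · -- column sum is θ : decrease an entry
      obtain ⟨i, hi⟩ := hgt
      refine Or.inl ⟨i, fun heq => ?_⟩
      have hkey := key i
      have hj := congrFun heq j
      simp only [colApply, hgdef] at hj
      split_ifs at hj <;> omega
  · exact Or.inl hg
end

section
/- Let n ≥ 1, N ≥ 1 and m ≥ 1. Let E be the set of all n×N matrices M with entries in {0,1,…,m} such that every column of M has at most one nonzero entry (i.e., each column is either the zero vector or v·e_i for some 1 ≤ v ≤ m and some row i). Then E is a fooling set for the columnwise extension of the MAX function (where MAX of a column is its largest entry), and |E| = (mn+1)^N. -/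
def Fenc (n N m : ℕ) : (Fin N → Option (Fin n × Fin m)) → (Fin n → Fin N → ℕ) :=
  fun o i j => match o j with
    | none => 0
    | some p => if i = p.1 then (p.2 : ℕ) + 1 else 0

lemma Fenc_inj (n N m : ℕ) : Function.Injective (Fenc n N m) := by
  intro o o' h
  funext j
  have hc : ∀ i, Fenc n N m o i j = Fenc n N m o' i j := fun i => congrFun (congrFun h i) j
  cases ho : o j with
  | none =>
    cases ho' : o' j with
    | none => rfl
    | some p =>
      have := hc p.1
      simp [Fenc, ho, ho'] at this
  | some p =>
    cases ho' : o' j with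
    | none =>
      have := hc p.1
      simp [Fenc, ho, ho'] at this
    | some q =>
      have h1 := hc p.1
      simp [Fenc, ho, ho'] at h1
      by_cases hpq : p.1 = q.1
      · rw [if_pos hpq] at h1
        have : p = q := Prod.ext hpq (Fin.ext (by omega))
        rw [this]
      · rw [if_neg hpq] at h1
        omega

/-- The set of `n × N` matrices with entries in `{0,…,m}` in which every column has
at most one nonzero entry is a fooling set for the columnwise extension of the MAX
function, and has cardinality `(m·n + 1)^N`. -/
theorem stmt_16 (n N m : ℕ) (hn : 1 ≤ n) (hN : 1 ≤ N) (hm : 1 ≤ m) :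
    IsFoolingSet (fun x : Fin n → ℕ => Finset.univ.sup x)
      {M : Fin n → Fin N → ℕ | (∀ i j, M i j ≤ m) ∧
        ∀ j, ∀ i₁ i₂, M i₁ j ≠ 0 → M i₂ j ≠ 0 → i₁ = i₂} ∧
    Set.ncard {M : Fin n → Fin N → ℕ | (∀ i j, M i j ≤ m) ∧
        ∀ j, ∀ i₁ i₂, M i₁ j ≠ 0 → M i₂ j ≠ 0 → i₁ = i₂} = (m * n + 1) ^ N := by
  haveI : NeZero n := ⟨by omega⟩
  constructor
  · -- fooling set
    intro M1 hM1 M2 hM2 hne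
    by_contra hcon
    push_neg at hcon
    obtain ⟨heq, h1, h2⟩ := hcon
    apply hne
    funext i j
    obtain ⟨hb1, ho1⟩ := hM1
    obtain ⟨hb2, ho2⟩ := hM2
    have hsup : Finset.univ.sup (fun i => M1 i j) = Finset.univ.sup (fun i => M2 i j) :=
      congrFun heq j
    by_cases hz : Finset.univ.sup (fun i => M1 i j) = 0
    · have z1 : M1 i j = 0 := by
        have := Finset.sup_eq_bot_iff (fun i => M1 i j) Finset.univ |>.mp hz i (Finset.mem_univ i)
        exact this
      have z2 : M2 i j = 0 := by
        have := Finset.sup_eq_bot_iff (fun i => M2 i j) Finset.univ |>.mp (hsup ▸ hz) i (Finset.mem_univ i)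
        exact this
      rw [z1, z2]
    · obtain ⟨i1, _, hi1⟩ := Finset.exists_mem_eq_sup Finset.univ Finset.univ_nonempty
        (fun i => M1 i j)
      obtain ⟨i2, _, hi2⟩ := Finset.exists_mem_eq_sup Finset.univ Finset.univ_nonempty
        (fun i => M2 i j)
      have hne1 : M1 i1 j ≠ 0 := fun h => hz (hi1.trans h)
      have hne2 : M2 i2 j ≠ 0 := fun h => hz (hsup.trans (hi2.trans h))
      have hi12 : i1 = i2 := by
        by_contra hii
        have hrep := congrFun (h1 i1) j
        have hcol : ∀ r, replaceRow M1 M2 i1 r j = 0 := by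
          intro r
          unfold replaceRow
          by_cases hr : r = i1
          · rw [if_pos hr, hr]
            by_contra h0
            exact hii (ho2 j i1 i2 h0 hne2)
          · rw [if_neg hr]
            by_contra h0
            exact hr (ho1 j r i1 h0 hne1)
        have : colApply (fun x : Fin n → ℕ => Finset.univ.sup x) (replaceRow M1 M2 i1) j = 0 := by
          unfold colApply
          simp only [hcol]
          simp
        rw [hrep] at this
        exact hz this
      by_cases hii1 : i = i1
      · subst hii1
        rw [← hi1, hsup, hi2, hi12]
      · have z1 : M1 i j = 0 := by
          by_contra h0; exact hii1 (ho1 j i i1 h0 hne1)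
        have z2 : M2 i j = 0 := by
          by_contra h0; exact hii1 (ho2 j i i2 h0 hne2 |>.trans hi12.symm)
        rw [z1, z2]
  · -- cardinality
    have hrange : {M : Fin n → Fin N → ℕ | (∀ i j, M i j ≤ m) ∧
        ∀ j, ∀ i₁ i₂, M i₁ j ≠ 0 → M i₂ j ≠ 0 → i₁ = i₂} = Set.range (Fenc n N m) := by
      ext M
      constructor
      · rintro ⟨hb, ho⟩
        refine ⟨fun j => if h : ∃ i, M i j ≠ 0 then
          some (h.choose, ⟨M h.choose j - 1, by have := hb h.choose j; have := h.choose_spec; omega⟩)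
          else none, ?_⟩
        funext i j
        by_cases h : ∃ i, M i j ≠ 0
        · simp only [Fenc, dif_pos h]
          by_cases hi : i = h.choose
          · rw [if_pos hi, hi]
            have := h.choose_spec
            omega
          · rw [if_neg hi]
            by_contra h0
            exact hi (ho j i h.choose (by omega) h.choose_spec)
        · simp only [Fenc, dif_neg h]
          push_neg at h
          exact (h i).symm
      · rintro ⟨o, rfl⟩
        constructor
        · intro i j
          unfold Fenc
          cases ho : o j with
          | none => simp
          | some p => simp only; split
                      · have := p.2.isLt; omega
                      · omega
        · intro j i1 i2 h1' h2'
          unfold Fenc at h1' h2'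
          cases ho : o j with
          | none => rw [ho] at h1'; simp at h1'
          | some p =>
            rw [ho] at h1' h2'
            simp only at h1' h2'
            split at h1'
            · split at h2'
              · omega
              · omega
            · omega
    rw [hrange, ← Set.image_univ, Set.ncard_image_of_injective _ (Fenc_inj n N m),
      Set.ncard_univ, Nat.card_eq_fintype_card]
    rw [Fintype.card_fun]
    simp [mul_comm]
end

section
/- Let θ and n be integers with 1 ≤ θ ≤ n, and let p be a real number with 0 < p ≤ 1. Then Σ_{i=θ}^{n−1} Σ_{j=0}^{θ−1} C(i,j)·p^j·(1−p)^{i−j} ≤ θ·(1−p)/p, where C(i,j) denotes the binomial coefficient. -/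
private def fAux (s : ℕ) (p : ℝ) (i : ℕ) : ℝ :=
  ∑ j ∈ Finset.range (s+1), (i.choose j : ℝ) * p ^ j * (1 - p) ^ (i - j)

private def dAux (s : ℕ) (p : ℝ) (i : ℕ) : ℝ :=
  (i.choose s : ℝ) * p ^ (s+1) * (1 - p) ^ (i - s)

private lemma step_aux (s : ℕ) (p : ℝ) (i : ℕ) (hi : s + 1 ≤ i) :
    fAux s p (i+1) = fAux s p i - dAux s p i := by
  have hS : fAux s p i
      = (∑ j ∈ Finset.range s, (i.choose j : ℝ) * p ^ j * (1-p) ^ (i - j))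
        + (i.choose s : ℝ) * p ^ s * (1-p) ^ (i - s) := by
    rw [fAux, Finset.sum_range_succ]
  have hF : fAux s p i
      = (∑ j ∈ Finset.range s, (i.choose (j+1) : ℝ) * p ^ (j+1) * (1-p) ^ (i - (j+1)))
        + (1-p) ^ i := by
    rw [fAux, Finset.sum_range_succ']
    simp
  have hterm : ∀ j ∈ Finset.range s,
      ((i+1).choose (j+1) : ℝ) * p ^ (j+1) * (1-p) ^ (i+1 - (j+1))
      = p * ((i.choose j : ℝ) * p ^ j * (1-p) ^ (i - j))
        + (1-p) * ((i.choose (j+1) : ℝ) * p ^ (j+1) * (1-p) ^ (i - (j+1))) := by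
    intro j hj
    rw [Finset.mem_range] at hj
    have h1 : i + 1 - (j+1) = i - j := by omega
    have h2 : i - j = (i - (j+1)) + 1 := by omega
    rw [h1, h2, Nat.choose_succ_succ', pow_succ]
    push_cast
    ring
  have h3 : (((i+1).choose 0 : ℕ) : ℝ) * p ^ 0 * (1-p) ^ (i+1-0) = (1-p) * (1-p)^i := by
    simp [pow_succ]
    ring
  rw [fAux, Finset.sum_range_succ', Finset.sum_congr rfl hterm, Finset.sum_add_distrib,
    ← Finset.mul_sum, ← Finset.mul_sum, h3]
  have e1 : ∑ j ∈ Finset.range s, (i.choose j : ℝ) * p ^ j * (1-p) ^ (i - j)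
      = fAux s p i - (i.choose s : ℝ) * p ^ s * (1-p) ^ (i - s) := by
    rw [hS]; ring
  have e2 : ∑ j ∈ Finset.range s, (i.choose (j+1) : ℝ) * p ^ (j+1) * (1-p) ^ (i - (j+1))
      = fAux s p i - (1-p) ^ i := by
    rw [hF]; ring
  rw [e1, e2, dAux]
  ring

private lemma tele_aux (s : ℕ) (p : ℝ) (i : ℕ) (hi : s+1 ≤ i) (M : ℕ) :
    ∑ m ∈ Finset.range M, dAux s p (i+m) = fAux s p i - fAux s p (i+M) := by
  induction M with
  | zero => simp
  | succ M ih =>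
      rw [Finset.sum_range_succ, ih]
      have : fAux s p (i + (M+1)) = fAux s p (i+M) - dAux s p (i+M) :=
        step_aux s p (i+M) (by omega)
      rw [this]
      ring

private lemma vanish_aux (s : ℕ) (p : ℝ) (hp0 : 0 < p) (hp1 : p ≤ 1) :
    Filter.Tendsto (fun M => fAux s p M) Filter.atTop (nhds 0) := by
  have hq : ‖1 - p‖ < 1 := by
    rw [Real.norm_eq_abs, abs_lt]; constructor <;> linarith
  have : (0:ℝ) = ∑ j ∈ Finset.range (s+1), (0:ℝ) := by simp
  rw [this]
  unfold fAux
  apply tendsto_finset_sum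
  intro j _
  have base : Summable (fun m : ℕ => ((m+j).choose j : ℝ) * (1-p)^m) :=
    summable_choose_mul_geometric_of_norm_lt_one j hq
  have h0 : Filter.Tendsto (fun m : ℕ => ((m+j).choose j : ℝ) * (1-p)^m * p^j)
      Filter.atTop (nhds 0) := by
    have := (base.tendsto_atTop_zero).mul_const (p^j)
    simpa using this
  have h1 : Filter.Tendsto (fun M : ℕ => ((M-j+j).choose j : ℝ) * (1-p)^(M-j) * p^j)
      Filter.atTop (nhds 0) :=
    h0.comp (Filter.tendsto_sub_atTop_nat j)
  apply h1.congr'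
  filter_upwards [Filter.eventually_ge_atTop j] with M hM
  have : M - j + j = M := by omega
  rw [this]
  ring

private lemma hasSum_f_aux (s : ℕ) (p : ℝ) (hp0 : 0 < p) (hp1 : p ≤ 1) (i : ℕ) (hi : s+1 ≤ i) :
    HasSum (fun m => dAux s p (i+m)) (fAux s p i) := by
  have hq : ‖1 - p‖ < 1 := by
    rw [Real.norm_eq_abs, abs_lt]; constructor <;> linarith
  have hsummable : Summable (fun m => dAux s p (i+m)) := by
    have base : Summable (fun m : ℕ => ((m+s).choose s : ℝ) * (1-p)^m) :=
      summable_choose_mul_geometric_of_norm_lt_one s hq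
    have base2 : Summable (fun m : ℕ => ((m+s).choose s : ℝ) * (1-p)^m * p^(s+1)) :=
      base.mul_right _
    have base3 := (summable_nat_add_iff
      (f := fun m : ℕ => ((m+s).choose s : ℝ) * (1-p)^m * p^(s+1)) (i - s)).2 base2
    apply base3.congr
    intro m
    have h1 : m + (i - s) + s = i + m := by omega
    have h2 : i + m - s = m + (i - s) := by omega
    rw [dAux, h1, h2]
    ring
  rw [hsummable.hasSum_iff_tendsto_nat]
  have hv : Filter.Tendsto (fun M : ℕ => fAux s p (i + M)) Filter.atTop (nhds 0) := by
    have := (vanish_aux s p hp0 hp1).comp (Filter.tendsto_add_atTop_nat i)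
    apply this.congr
    intro M
    simp [Nat.add_comm]
  have h2 : Filter.Tendsto (fun M : ℕ => fAux s p i - fAux s p (i + M))
      Filter.atTop (nhds (fAux s p i - 0)) :=
    Filter.Tendsto.sub tendsto_const_nhds hv
  rw [sub_zero] at h2
  apply h2.congr
  intro M
  rw [tele_aux s p i hi M]

private lemma dAux_nonneg (s : ℕ) (p : ℝ) (hp0 : 0 < p) (hp1 : p ≤ 1) (i : ℕ) :
    0 ≤ dAux s p i := by
  unfold dAux
  have : (0:ℝ) ≤ 1 - p := by linarith
  positivity

/-- For `1 ≤ θ ≤ n` and `0 < p ≤ 1`,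
`Σ_{i=θ}^{n-1} Σ_{j=0}^{θ-1} C(i,j) p^j (1-p)^{i-j} ≤ θ (1-p)/p`.
This bounds the expected number of undetermined block instances in the sequential
scheme for computing the Boolean threshold function `Π_θ` of `n` i.i.d. Bernoulli(p)
measurements, showing its average-case complexity is `O(θ)`. -/
theorem stmt_18 (θ n : ℕ) (hθ : 1 ≤ θ) (hn : θ ≤ n) (p : ℝ) (hp0 : 0 < p) (hp1 : p ≤ 1) :
    ∑ i ∈ Finset.Ico θ n, ∑ j ∈ Finset.range θ,
      (i.choose j : ℝ) * p ^ j * (1 - p) ^ (i - j)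
    ≤ (θ : ℝ) * (1 - p) / p := by
  obtain ⟨s, rfl⟩ : ∃ s, θ = s + 1 := ⟨θ - 1, by omega⟩
  have hq : ‖1 - p‖ < 1 := by
    rw [Real.norm_eq_abs, abs_lt]; constructor <;> linarith
  set R := n - (s+1) with hR
  have hLHS : ∑ i ∈ Finset.Ico (s+1) n, ∑ j ∈ Finset.range (s+1),
      (i.choose j : ℝ) * p ^ j * (1 - p) ^ (i - j)
      = ∑ r ∈ Finset.range R, fAux s p (s+1+r) := by
    rw [Finset.sum_Ico_eq_sum_range]
    rfl
  rw [hLHS]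
  have H' : ∀ r ∈ Finset.range R,
      HasSum (fun k => if r ≤ k then dAux s p (s+1+k) else 0) (fAux s p (s+1+r)) := by
    intro r _
    have H : HasSum (fun m => dAux s p (s+1+r+m)) (fAux s p (s+1+r)) :=
      hasSum_f_aux s p hp0 hp1 (s+1+r) (by omega)
    have hinj : Function.Injective (fun m : ℕ => r + m) := fun a b h => by
      simpa using h
    rw [← Function.Injective.hasSum_iff (f := fun k => if r ≤ k then dAux s p (s+1+k) else 0)
      hinj ?_]
    · exact H.congr_fun (fun m => by simp [Nat.add_assoc])
    · intro k hk
      simp only [Set.mem_range, not_exists] at hk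
      have : ¬ r ≤ k := fun h => hk (k - r) (by omega)
      simp [this]
  have Hsum : HasSum (fun k => ∑ r ∈ Finset.range R, if r ≤ k then dAux s p (s+1+k) else 0)
      (∑ r ∈ Finset.range R, fAux s p (s+1+r)) := hasSum_sum H'
  have hcount : ∀ k : ℕ, (∑ r ∈ Finset.range R, if r ≤ k then dAux s p (s+1+k) else 0)
      = (min (k+1) R : ℕ) * dAux s p (s+1+k) := by
    intro k
    rw [← Finset.sum_filter]
    have hfil : (Finset.range R).filter (fun r => r ≤ k) = Finset.range (min (k+1) R) := by
      ext x
      simp only [Finset.mem_filter, Finset.mem_range, lt_min_iff]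
      omega
    rw [hfil, Finset.sum_const, Finset.card_range, nsmul_eq_mul]
  have Htarget : HasSum (fun k : ℕ => ((k:ℝ)+1) * dAux s p (s+1+k)) (((s:ℝ)+1) * (1-p) / p) := by
    have base : HasSum (fun k : ℕ => ((k+(s+1)).choose (s+1) : ℝ) * (1-p)^k)
        (1 / (1-(1-p))^(s+1+1)) := hasSum_choose_mul_geometric_of_norm_lt_one (s+1) hq
    have base2 := base.mul_right (((s:ℝ)+1) * p^(s+1) * (1-p))
    have hval : 1 / (1-(1-p))^(s+1+1) * (((s:ℝ)+1) * p^(s+1) * (1-p))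
        = ((s:ℝ)+1) * (1-p) / p := by
      have h1 : 1 - (1-p) = p := by ring
      rw [h1]
      field_simp
      ring
    rw [hval] at base2
    apply base2.congr_fun
    intro k
    have hexp : s + 1 + k - s = k + 1 := by omega
    have hch : ((s+1+k).choose (s+1)) * (s+1) = ((s+1+k).choose s) * (k+1) := by
      have h0 := Nat.choose_succ_right_eq (s+1+k) s
      rwa [hexp] at h0
    rw [dAux, hexp]
    have hcast : (((s+1+k).choose (s+1)) : ℝ) * ((s:ℝ)+1)
        = (((s+1+k).choose s) : ℝ) * ((k:ℝ)+1) := by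
      exact_mod_cast congrArg (Nat.cast : ℕ → ℝ) hch
    have hcomm : (k+(s+1)).choose (s+1) = (s+1+k).choose (s+1) := by rw [Nat.add_comm]
    rw [hcomm]
    linear_combination (-(p^(s+1) * (1-p)^(k+1))) * hcast
  have final := hasSum_le (fun k => ?_) Hsum Htarget
  · calc ∑ r ∈ Finset.range R, fAux s p (s+1+r) ≤ ((s:ℝ)+1) * (1-p) / p := final
      _ = ((s+1 : ℕ) : ℝ) * (1-p) / p := by push_cast; ring
  · rw [hcount k]
    apply mul_le_mul_of_nonneg_right _ (dAux_nonneg s p hp0 hp1 _)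
    have h1 : min (k+1) R ≤ k + 1 := min_le_left _ _
    calc ((min (k+1) R : ℕ) : ℝ) ≤ ((k+1 : ℕ) : ℝ) := by exact_mod_cast h1
      _ = (k:ℝ) + 1 := by push_cast; ring
end

section
/- (Optimality of the greedy maximum-entropy strategy for approximate computation of parity.) Let h(x) = −x·log x − (1−x)·log(1−x) denote binary entropy (h(0)=h(1)=0). Let n ≥ 1, let p_1,…,p_n ∈ [0,1], and let 0 ≤ θ ≤ n. For a subset T ⊆ {1,…,n}, the probability that the parity (XOR) of independent Bernoulli(p_i) variables over i ∈ T equals 1 is q(T) = (1 − Π_{i∈T}(1 − 2p_i))/2. Suppose A ⊆ {1,…,n} is a subset of size n−θ such that h(p_j) ≤ h(p_i) for every i ∈ A and j ∉ A (i.e., A consists of indices with the n−θ largest binary entropies). Then for every subset S ⊆ {1,…,n} of size n−θ, h(q(Aᶜ)) ≤ h(q(Sᶜ)), where Aᶜ and Sᶜ denote complements in {1,…,n}. That is, transmitting the n−θ nodes of highest binary entropy minimizes the conditional entropy of the parity function after n−θ bits are exchanged. -/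
/-- Binary entropy `h(x) = -x log x - (1-x) log (1-x)` (natural logarithm; the
conventions `h(0) = h(1) = 0` hold automatically since `Real.log 0 = 0`). -/
noncomputable def binEnt (x : ℝ) : ℝ := -x * Real.log x - (1 - x) * Real.log (1 - x)

/-- `qXor p T` is the probability that the XOR of independent Bernoulli(`p i`)
variables over `i ∈ T` equals `1`: `q(T) = (1 - Π_{i ∈ T} (1 - 2 p_i)) / 2`. -/
noncomputable def qXor {n : ℕ} (p : Fin n → ℝ) (T : Finset (Fin n)) : ℝ :=
  (1 - ∏ i ∈ T, (1 - 2 * p i)) / 2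

lemma binEnt_eq (x : ℝ) : binEnt x = Real.binEntropy x := by
  simp [binEnt, Real.binEntropy, Real.log_inv]; ring

lemma binEnt_abs (x : ℝ) : Real.binEntropy ((1 - |1 - 2*x|)/2) = Real.binEntropy x := by
  rcases abs_cases (1 - 2*x) with ⟨h, _⟩ | ⟨h, _⟩
  · rw [h]; ring_nf
  · rw [h, show (1 - -(1 - 2*x))/2 = 1 - x by ring, Real.binEntropy_one_sub]

lemma binEnt_mono {u v : ℝ} (hu : u ≤ 1) (hv : 0 ≤ v) (huv : v ≤ u) :
    Real.binEntropy ((1-u)/2) ≤ Real.binEntropy ((1-v)/2) :=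
  Real.binEntropy_strictMonoOn.monotoneOn
    ⟨by linarith, by linarith⟩ ⟨by linarith, by linarith⟩ (by linarith)

lemma abs_anti {x y : ℝ} (hx0 : 0 ≤ x) (hx1 : x ≤ 1) (hy0 : 0 ≤ y) (hy1 : y ≤ 1)
    (h : Real.binEntropy x ≤ Real.binEntropy y) : |1 - 2*y| ≤ |1 - 2*x| := by
  by_contra hc
  push_neg at hc
  have h1 : |1 - 2*x| ≤ 1 := by rw [abs_le]; constructor <;> linarith
  have h2 : 0 ≤ |1 - 2*y| := abs_nonneg _
  have := Real.binEntropy_strictMonoOn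
    (show (1 - |1 - 2*y|)/2 ∈ Set.Icc (0:ℝ) 2⁻¹ by
      constructor <;> [linarith [abs_nonneg (1-2*y), show |1-2*y| ≤ 1 from by rw [abs_le]; constructor <;> linarith]; linarith [abs_nonneg (1-2*y)]])
    (show (1 - |1 - 2*x|)/2 ∈ Set.Icc (0:ℝ) 2⁻¹ by constructor <;> linarith [abs_nonneg (1-2*x)])
    (by linarith)
  rw [binEnt_abs, binEnt_abs] at this
  linarith

/-- Optimality of the greedy maximum-entropy strategy for approximate computation of
the parity function: if `A` is a set of `n - θ` indices with the largest binary
entropies, then for any set `S` of `n - θ` indices, the conditional entropy of the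
parity after the nodes of `A` transmit, namely `h(q(Aᶜ))`, is at most `h(q(Sᶜ))`. -/
theorem stmt_19 (n θ : ℕ) (hn : 1 ≤ n) (hθ : θ ≤ n)
    (p : Fin n → ℝ) (hp0 : ∀ i, 0 ≤ p i) (hp1 : ∀ i, p i ≤ 1)
    (A : Finset (Fin n)) (hA : A.card = n - θ)
    (hAmax : ∀ i ∈ A, ∀ j ∉ A, binEnt (p j) ≤ binEnt (p i))
    (S : Finset (Fin n)) (hS : S.card = n - θ) :
    binEnt (qXor p Aᶜ) ≤ binEnt (qXor p Sᶜ) := by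
  classical
  set f : Fin n → ℝ := fun i => |1 - 2 * p i| with hf
  have hf0 : ∀ i, 0 ≤ f i := fun i => abs_nonneg _
  have hf1 : ∀ i, f i ≤ 1 := fun i => by
    rw [hf, abs_le]; constructor <;> [linarith [hp1 i]; linarith [hp0 i]]
  -- key: f i ≤ f j for i ∈ A, j ∉ A
  have hkey : ∀ i ∈ A, ∀ j ∉ A, f i ≤ f j := by
    intro i hi j hj
    have := hAmax i hi j hj
    rw [binEnt_eq, binEnt_eq] at this
    exact abs_anti (hp0 j) (hp1 j) (hp0 i) (hp1 i) this
  -- product inequality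
  have hcard : (Sᶜ \ Aᶜ).card = (Aᶜ \ Sᶜ).card := by
    have h1 : Aᶜ.card = Sᶜ.card := by rw [Finset.card_compl, Finset.card_compl, hA, hS]
    rw [Finset.card_sdiff_comm h1.symm]
  have hprod : ∏ i ∈ Sᶜ \ Aᶜ, f i ≤ ∏ i ∈ Aᶜ \ Sᶜ, f i := by
    have e := Finset.equivOfCardEq hcard
    calc ∏ i ∈ Sᶜ \ Aᶜ, f i = ∏ i : (Sᶜ \ Aᶜ : Finset (Fin n)), f i := by
          rw [Finset.prod_coe_sort]
      _ ≤ ∏ i : (Sᶜ \ Aᶜ : Finset (Fin n)), f (e i) := by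
          apply Finset.prod_le_prod (fun i _ => hf0 _)
          intro i _
          have hiA : (i : Fin n) ∈ A := by
            have := i.2; simp [Finset.mem_sdiff] at this; simpa using this.2
          have hjA : ((e i : Fin n)) ∉ A := by
            have := (e i).2; simp [Finset.mem_sdiff] at this; exact (this.1)
          exact hkey _ hiA _ hjA
      _ = ∏ i : (Aᶜ \ Sᶜ : Finset (Fin n)), f i := Equiv.prod_comp e (fun j => f (j : Fin n))
      _ = ∏ i ∈ Aᶜ \ Sᶜ, f i := Finset.prod_coe_sort _ _
  have hprodAS : ∏ i ∈ Sᶜ, f i ≤ ∏ i ∈ Aᶜ, f i := by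
    rw [← Finset.prod_inter_mul_prod_diff Sᶜ Aᶜ f, ← Finset.prod_inter_mul_prod_diff Aᶜ Sᶜ f,
      show Aᶜ ∩ Sᶜ = Sᶜ ∩ Aᶜ from Finset.inter_comm _ _]
    exact mul_le_mul_of_nonneg_left hprod (Finset.prod_nonneg (fun i _ => hf0 i))
  -- abs of products
  have habs : ∀ T : Finset (Fin n), |∏ i ∈ T, (1 - 2 * p i)| = ∏ i ∈ T, f i := by
    intro T; rw [Finset.abs_prod]
  have hle1 : ∀ T : Finset (Fin n), ∏ i ∈ T, f i ≤ 1 :=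
    fun T => Finset.prod_le_one (fun i _ => hf0 i) (fun i _ => hf1 i)
  have hq : ∀ T : Finset (Fin n), binEnt (qXor p T) = Real.binEntropy ((1 - ∏ i ∈ T, f i)/2) := by
    intro T
    rw [binEnt_eq, ← binEnt_abs (qXor p T), qXor,
      show 1 - 2 * ((1 - ∏ i ∈ T, (1 - 2 * p i)) / 2) = ∏ i ∈ T, (1 - 2 * p i) by ring,
      habs]
  rw [hq, hq]
  exact binEnt_mono (hle1 _) (Finset.prod_nonneg (fun i _ => hf0 i)) hprodAS
end
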